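/- In any k-ribbon tiling of a k-ribbon Fibonacci shape, every k-ribbon lies entirely within a single column of the shape: each column of height 1 arising from a letter 1_j is tiled by exactly one k-ribbon, which has height j, and each column of height 2 (arising from a letter 2) is tiled by exactly two k-ribbons, one of some height j stacked on top of one of height k+1−j. Consequently, all k-ribbon tilings of a given k-ribbon Fibonacci shape have the same number of k-ribbons and involve the same columns. -/

import Mathlib

namespace KRF

/-- A letter of the alphabet `{1_1, …, 1_k, 2}`:  `one j` stands for the letter `1_j`
(with `1 ≤ j ≤ k` for genuine letters), and `two` stands for the letter `2`. -/
inductive Letter (k : ℕ) : Type where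
  | one : ℕ → Letter k
  | two : Letter k
deriving DecidableEq

/-- A word over the alphabet `{1_1, …, 1_k, 2}`, listed from the leftmost letter to the
rightmost letter. -/
abbrev Word (k : ℕ) := List (Letter k)

/-- The contribution of a letter to the rank: each `1_j` counts `1` and each `2` counts `2`. -/
def Letter.rank {k : ℕ} : Letter k → ℕ
  | .one _ => 1
  | .two => 2

/-- The rank of a word: the sum of its letters. -/
def Word.rank {k : ℕ} (w : Word k) : ℕ := (w.map Letter.rank).sum

/-- The letter `1_j` is valid when `1 ≤ j ≤ k`. -/
def Letter.Valid (k : ℕ) : Letter k → Prop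
  | .one j => 1 ≤ j ∧ j ≤ k
  | .two => True

/-- A genuine word of the Fibonacci poset `Z(k)`: all of its letters are valid. -/
def Word.Valid (k : ℕ) (w : Word k) : Prop := ∀ l ∈ w, l.Valid k

/-- The cover relation of the Fibonacci poset `Z(k)`:  `z` is covered by `w` iff `z` is
obtained from `w` either by changing a `2` into some `1_j` when all letters to the left of
that `2` are `2`'s, or by deleting the leftmost letter of the form `1_j`. -/
def ZCovers (k : ℕ) (z w : Word k) : Prop :=
  (∃ (p s : Word k) (j : ℕ), (∀ l ∈ p, l = Letter.two) ∧ 1 ≤ j ∧ j ≤ k ∧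
      w = p ++ Letter.two :: s ∧ z = p ++ Letter.one j :: s) ∨
  (∃ (p s : Word k) (j : ℕ), (∀ l ∈ p, l = Letter.two) ∧ 1 ≤ j ∧ j ≤ k ∧
      w = p ++ Letter.one j :: s ∧ z = p ++ s)

/-- `c 0 ⋖ c 1 ⋖ ⋯ ⋖ c n` is a saturated chain in `Z(k)` starting at the empty word. -/
def IsZChain (k n : ℕ) (c : ℕ → Word k) : Prop :=
  c 0 = [] ∧ ∀ i, i < n → ZCovers k (c i) (c (i + 1))

end KRF
namespace KRF

/-- The cells of a `k`-ribbon of height `j` of the first type, with base square at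
`(x, 0)`: `j` squares stacked vertically in a single column starting in the first row,
followed by `k − j` adjacent squares in the first row.  A cell `(x, r)` is the unit
square in (0-indexed) column `x` and row `r` (row `0` is the bottom row). -/
def ribbonCellsA (k x j : ℕ) : Finset (ℕ × ℕ) :=
  ((Finset.range j).image fun r => (x, r)) ∪
    ((Finset.range (k - j)).image fun t => (x + 1 + t, 0))

/-- The cells of a `k`-ribbon of height `j` of the second type, sitting in a column of
height 2 with base square at `(x, 0)`: `j` squares stacked vertically atop a column of
height `k + 1`, together with the `k − j` rightmost of the adjacent `k − 1` squares in
the first row. -/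
def ribbonCellsB (k x j : ℕ) : Finset (ℕ × ℕ) :=
  ((Finset.range j).image fun r => (x, k + 1 - j + r)) ∪
    ((Finset.range (k - j)).image fun t => (x + j + t, 0))

/-- A placed `k`-ribbon: its base `x`-coordinate, its height, and whether it is of the
second type (stacked atop a column of height `k + 1`). -/
structure GRibbon : Type where
  x : ℕ
  h : ℕ
  isTop : Bool
deriving DecidableEq

/-- The cells occupied by a placed `k`-ribbon. -/
def GRibbon.cells (k : ℕ) (r : GRibbon) : Finset (ℕ × ℕ) :=
  if r.isTop then ribbonCellsB k r.x r.h else ribbonCellsA k r.x r.h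

/-- The width (number of `x`-coordinates) of the group of squares of a letter. -/
def letterWidth (k : ℕ) : Letter k → ℕ
  | .one j => k - j + 1
  | .two => k

/-- The cells of the column contributed by a letter, with base square at `(x, 0)`:
a letter `1_j` contributes `j` squares stacked vertically starting in the first row
followed by `k − j` adjacent squares in the first row, and a letter `2` contributes
`k + 1` squares stacked vertically starting in the first row followed by `k − 1` adjacent
squares in the first row. -/
def letterCells (k x : ℕ) : Letter k → Finset (ℕ × ℕ)
  | .one j => ribbonCellsA k x j
  | .two => ((Finset.range (k + 1)).image fun r => (x, r)) ∪
      ((Finset.range (k - 1)).image fun t => (x + 1 + t, 0))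

/-- The cells of the `k`-ribbon Fibonacci shape of the word `w`, the leftmost column
starting at `x`-coordinate `x`. -/
def shapeCellsAux (k : ℕ) : ℕ → Word k → Finset (ℕ × ℕ)
  | _, [] => ∅
  | x, l :: w => letterCells k x l ∪ shapeCellsAux k (x + letterWidth k l) w

/-- The cells of the `k`-ribbon Fibonacci shape determined by the word `w`. -/
def shapeCells (k : ℕ) (w : Word k) : Finset (ℕ × ℕ) := shapeCellsAux k 0 w

/-- `R` is a `k`-ribbon tiling of the `k`-ribbon Fibonacci shape of `w`: a placement of
`k`-ribbons (of heights between `1` and `k`) with pairwise disjoint cells covering every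
square of the shape exactly once. -/
def IsGTiling (k : ℕ) (w : Word k) (R : Finset GRibbon) : Prop :=
  (∀ r ∈ R, 1 ≤ r.h ∧ r.h ≤ k) ∧
  (∀ r ∈ R, ∀ r' ∈ R, r ≠ r' → Disjoint (r.cells k) (r'.cells k)) ∧
  R.biUnion (fun r => r.cells k) = shapeCells k w

/-- The `x`-coordinate at which the `i`-th column (0-indexed) of the shape of `w` starts. -/
def colOffset (k : ℕ) (w : Word k) (i : ℕ) : ℕ := ((w.take i).map (letterWidth k)).sum

end KRF
namespace KRF

/-- The cells of the `i`-th column (0-indexed) of the `k`-ribbon Fibonacci shape of `w`. -/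
def colCells (k : ℕ) (w : Word k) (i : Fin w.length) : Finset (ℕ × ℕ) :=
  letterCells k (colOffset k w i) w[i]

/-!
Scan the shape from the left. Every cell lies weakly right of the leftmost column, so each
ribbon meeting that column is based in it, and two ribbons of the same type based in the same
column share their anchor cell (row `0` for the first type, row `k` for the second). Hence a
column of height `j` is exactly the first-type ribbon of height `j`, and a column of height
`k + 1` is exactly a first-type ribbon through its bottom cell together with a second-type
ribbon through its top cell, whose heights add up to `k + 1`: otherwise they overlap, or the
gap between them is covered by a third ribbon sharing an anchor with one of them. Removing
these ribbons leaves a tiling of the rest of the shape, so induction on the word gives the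
column structure and `#R = rank w`.
-/

section Cells

variable {k : ℕ}

@[simp] lemma mem_ribbonCellsA {x j a b : ℕ} :
    (a, b) ∈ ribbonCellsA k x j ↔
      a = x ∧ b < j ∨ b = 0 ∧ x < a ∧ a ≤ x + (k - j) := by
  simp only [ribbonCellsA, Finset.mem_union, Finset.mem_image, Finset.mem_range,
    Prod.mk.injEq]
  constructor
  · rintro (⟨r, hr, rfl, rfl⟩ | ⟨t, ht, rfl, rfl⟩) <;> omega
  · rintro (⟨rfl, hb⟩ | ⟨rfl, hxa, hak⟩)
    · exact .inl ⟨b, hb, rfl, rfl⟩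
    · exact .inr ⟨a - (x + 1), by omega, by omega, rfl⟩

@[simp] lemma mem_ribbonCellsB {x j a b : ℕ} :
    (a, b) ∈ ribbonCellsB k x j ↔
      a = x ∧ k + 1 - j ≤ b ∧ b < k + 1 - j + j ∨
        b = 0 ∧ x + j ≤ a ∧ a < x + j + (k - j) := by
  simp only [ribbonCellsB, Finset.mem_union, Finset.mem_image, Finset.mem_range,
    Prod.mk.injEq]
  constructor
  · rintro (⟨r, hr, rfl, rfl⟩ | ⟨t, ht, rfl, rfl⟩) <;> omega
  · rintro (⟨rfl, hjb, hb⟩ | ⟨rfl, hxa, hak⟩)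
    · exact .inl ⟨b - (k + 1 - j), by omega, rfl, by omega⟩
    · exact .inr ⟨a - (x + j), by omega, by omega, rfl⟩

@[simp] lemma mem_letterCells_two {x a b : ℕ} :
    (a, b) ∈ letterCells k x .two ↔ a = x ∧ b ≤ k ∨ b = 0 ∧ x < a ∧ a < x + k := by
  simp only [letterCells, Finset.mem_union, Finset.mem_image, Finset.mem_range,
    Prod.mk.injEq]
  constructor
  · rintro (⟨r, hr, rfl, rfl⟩ | ⟨t, ht, rfl, rfl⟩) <;> omega
  · rintro (⟨rfl, hb⟩ | ⟨rfl, hxa, hak⟩)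
    · exact .inl ⟨b, by omega, rfl, rfl⟩
    · exact .inr ⟨a - (x + 1), by omega, by omega, rfl⟩

lemma letterCells_one (x j : ℕ) : letterCells k x (.one j) = ribbonCellsA k x j := rfl

lemma ribbonCellsA_union_ribbonCellsB {x j : ℕ} (hj : 1 ≤ j) (hjk : j ≤ k) :
    ribbonCellsA k x (k + 1 - j) ∪ ribbonCellsB k x j = letterCells k x .two := by
  ext ⟨a, b⟩
  simp only [Finset.mem_union, mem_ribbonCellsA, mem_ribbonCellsB, mem_letterCells_two]
  omega

lemma fst_lt_of_mem_letterCells (hk : 1 ≤ k) {x : ℕ} {l : Letter k} {p : ℕ × ℕ}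
    (hp : p ∈ letterCells k x l) : p.1 < x + letterWidth k l := by
  obtain ⟨a, b⟩ := p
  cases l <;> simp_all [letterCells_one, letterWidth] <;> omega

lemma le_fst_of_mem_letterCells {x : ℕ} {l : Letter k} {p : ℕ × ℕ}
    (hp : p ∈ letterCells k x l) : x ≤ p.1 := by
  obtain ⟨a, b⟩ := p
  cases l <;> simp_all [letterCells_one] <;> omega

lemma le_fst_of_mem_shapeCellsAux {w : Word k} {x : ℕ} {p : ℕ × ℕ}
    (hp : p ∈ shapeCellsAux k x w) : x ≤ p.1 := by
  induction w generalizing x with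
  | nil => simp [shapeCellsAux] at hp
  | cons l w ih =>
    rcases Finset.mem_union.1 hp with hp | hp
    · exact le_fst_of_mem_letterCells hp
    · exact (Nat.le_add_right _ _).trans (ih hp)

lemma disjoint_letterCells_letterCells (hk : 1 ≤ k) {x y : ℕ} {l l' : Letter k}
    (hxy : x + letterWidth k l ≤ y) : Disjoint (letterCells k x l) (letterCells k y l') :=
  Finset.disjoint_left.2 fun _ hp hp' =>
    ((fst_lt_of_mem_letterCells hk hp).trans_le hxy).not_ge (le_fst_of_mem_letterCells hp')

lemma disjoint_letterCells_shapeCellsAux (hk : 1 ≤ k) {x y : ℕ} {l : Letter k} {w : Word k}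
    (hxy : x + letterWidth k l ≤ y) : Disjoint (letterCells k x l) (shapeCellsAux k y w) :=
  Finset.disjoint_left.2 fun _ hp hp' =>
    ((fst_lt_of_mem_letterCells hk hp).trans_le hxy).not_ge (le_fst_of_mem_shapeCellsAux hp')

lemma mk_mem_shapeCellsAux_cons_iff (hk : 1 ≤ k) {x b : ℕ} {l : Letter k} {w : Word k} :
    (x, b) ∈ shapeCellsAux k x (l :: w) ↔ (x, b) ∈ letterCells k x l := by
  refine ⟨fun hp => (Finset.mem_union.1 hp).resolve_right fun hp => ?_, Finset.mem_union_left _⟩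
  have hwidth : 0 < letterWidth k l := by cases l <;> simp only [letterWidth] <;> omega
  have := le_fst_of_mem_shapeCellsAux hp
  simp only at this
  omega

lemma Word.Valid.head {l : Letter k} {w : Word k} (hw : Word.Valid k (l :: w)) : l.Valid k :=
  hw l List.mem_cons_self

lemma Word.Valid.of_cons {l : Letter k} {w : Word k} (hw : Word.Valid k (l :: w)) :
    Word.Valid k w :=
  fun l' hl' => hw l' (List.mem_cons_of_mem _ hl')

lemma colOffset_cons_succ {l : Letter k} {w : Word k} {i : ℕ} :
    colOffset k (l :: w) (i + 1) = letterWidth k l + colOffset k w i := by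
  simp [colOffset]

end Cells

namespace GRibbon

variable {k : ℕ}

def anchor (k : ℕ) (r : GRibbon) : ℕ × ℕ := (r.x, if r.isTop then k else 0)

lemma anchor_mem_cells {r : GRibbon} (h1 : 1 ≤ r.h) (hk : r.h ≤ k) :
    r.anchor k ∈ r.cells k := by
  obtain ⟨x, h, _ | _⟩ := r <;> simp_all [anchor, cells] <;> omega

lemma x_le_of_mem_cells {r : GRibbon} {p : ℕ × ℕ} (hp : p ∈ r.cells k) : r.x ≤ p.1 := by
  obtain ⟨a, b⟩ := p
  obtain ⟨x, h, _ | _⟩ := r <;> simp_all [cells] <;> omega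

end GRibbon

structure IsRibbonTiling (k : ℕ) (R : Finset GRibbon) (S : Finset (ℕ × ℕ)) : Prop where
  height_mem : ∀ r ∈ R, 1 ≤ r.h ∧ r.h ≤ k
  pairwiseDisjoint : (R : Set GRibbon).PairwiseDisjoint (GRibbon.cells k)
  biUnion_cells : R.biUnion (GRibbon.cells k) = S

lemma IsGTiling.isRibbonTiling {k : ℕ} {w : Word k} {R : Finset GRibbon}
    (hR : IsGTiling k w R) : IsRibbonTiling k R (shapeCells k w) :=
  ⟨hR.1, fun r hr r' hr' => hR.2.1 r hr r' hr', hR.2.2⟩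

namespace IsRibbonTiling

variable {k : ℕ} {R C : Finset GRibbon} {S T : Finset (ℕ × ℕ)} {r r' : GRibbon}

lemma cells_subset (hR : IsRibbonTiling k R S) (hr : r ∈ R) : r.cells k ⊆ S :=
  hR.biUnion_cells ▸ Finset.subset_biUnion_of_mem _ hr

lemma anchor_mem_cells (hR : IsRibbonTiling k R S) (hr : r ∈ R) : r.anchor k ∈ r.cells k :=
  GRibbon.anchor_mem_cells (hR.height_mem r hr).1 (hR.height_mem r hr).2

lemma anchor_mem (hR : IsRibbonTiling k R S) (hr : r ∈ R) : r.anchor k ∈ S :=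
  hR.cells_subset hr (hR.anchor_mem_cells hr)

lemma not_cells_subset (hR : IsRibbonTiling k R S) (hr : r ∈ R) {U V : Finset (ℕ × ℕ)}
    (hU : r.cells k ⊆ U) (hUV : Disjoint U V) : ¬ r.cells k ⊆ V := fun hV =>
  Finset.disjoint_left.1 hUV (hU (hR.anchor_mem_cells hr)) (hV (hR.anchor_mem_cells hr))

lemma eq_of_mem_cells (hR : IsRibbonTiling k R S) (hr : r ∈ R) (hr' : r' ∈ R)
    {p : ℕ × ℕ} (hp : p ∈ r.cells k) (hp' : p ∈ r'.cells k) : r = r' := by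
  by_contra hne
  exact Finset.disjoint_left.1 (hR.pairwiseDisjoint hr hr' hne) hp hp'

lemma eq_of_anchor_eq (hR : IsRibbonTiling k R S) (hr : r ∈ R) (hr' : r' ∈ R)
    (h : r.anchor k = r'.anchor k) : r = r' :=
  hR.eq_of_mem_cells hr hr' (hR.anchor_mem_cells hr) (h ▸ hR.anchor_mem_cells hr')

lemma sdiff (hR : IsRibbonTiling k R (S ∪ T)) (hST : Disjoint S T) (hCR : C ⊆ R)
    (hC : C.biUnion (GRibbon.cells k) = S) : IsRibbonTiling k (R \ C) T where
  height_mem r hr := hR.height_mem r (Finset.mem_sdiff.1 hr).1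
  pairwiseDisjoint := hR.pairwiseDisjoint.subset (by simp)
  biUnion_cells := by
    ext p
    simp only [Finset.mem_biUnion, Finset.mem_sdiff]
    constructor
    · rintro ⟨r, ⟨hr, hrC⟩, hp⟩
      refine (Finset.mem_union.1 (hR.cells_subset hr hp)).resolve_left fun hpS => ?_
      obtain ⟨c, hc, hpc⟩ := Finset.mem_biUnion.1 (hC ▸ hpS)
      exact hrC (hR.eq_of_mem_cells hr (hCR hc) hp hpc ▸ hc)
    · intro hpT
      obtain ⟨r, hr, hp⟩ :=
        Finset.mem_biUnion.1 (hR.biUnion_cells ▸ Finset.mem_union_right S hpT)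
      refine ⟨r, ⟨hr, fun hrC => Finset.disjoint_left.1 hST ?_ hpT⟩, hp⟩
      exact hC ▸ Finset.mem_biUnion.2 ⟨r, hrC, hp⟩

variable {x : ℕ}

lemma exists_mk_mem_of_leftmost_mem (hR : IsRibbonTiling k R S) (hS : ∀ p ∈ S, x ≤ p.1)
    {b : ℕ} (hb : (x, b) ∈ S) :
    ∃ h t, (⟨x, h, t⟩ : GRibbon) ∈ R ∧ (x, b) ∈ (⟨x, h, t⟩ : GRibbon).cells k ∧
      1 ≤ h ∧ h ≤ k := by
  obtain ⟨⟨y, h, t⟩, hr, hb⟩ := Finset.mem_biUnion.1 (hR.biUnion_cells ▸ hb)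
  have hxy : x = y :=
    le_antisymm (hS _ (hR.anchor_mem hr)) (GRibbon.x_le_of_mem_cells hb)
  subst hxy
  exact ⟨h, t, hr, hb, hR.height_mem _ hr⟩

lemma mk_mem_of_leftmost_column_one (hR : IsRibbonTiling k R S) (hS : ∀ p ∈ S, x ≤ p.1)
    {m : ℕ} (hcol : ∀ b, (x, b) ∈ S ↔ b < m) (hm : 1 ≤ m) (hmk : m ≤ k) :
    (⟨x, m, false⟩ : GRibbon) ∈ R := by
  obtain ⟨h, t, hr, h0, h1, hhk⟩ := hR.exists_mk_mem_of_leftmost_mem hS ((hcol 0).2 hm)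
  obtain rfl : t = false := by
    cases t
    · rfl
    · simp [GRibbon.cells] at h0
      omega
  have hhm : h ≤ m := by
    have := (hcol (h - 1)).1 (hR.cells_subset hr (by simp [GRibbon.cells]; omega))
    omega
  obtain rfl | hlt := hhm.eq_or_lt
  · exact hr
  obtain ⟨h', t', hr', hh', -⟩ := hR.exists_mk_mem_of_leftmost_mem hS ((hcol h).2 hlt)
  cases t'
  · obtain rfl : h = h' := by
      simpa using hR.eq_of_anchor_eq hr hr' (by simp [GRibbon.anchor])
    simp [GRibbon.cells] at hh'
  · have := (hcol k).1 (hR.anchor_mem hr')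
    omega

lemma exists_mk_mem_of_leftmost_column_two (hR : IsRibbonTiling k R S) (hS : ∀ p ∈ S, x ≤ p.1)
    (hcol : ∀ b, (x, b) ∈ S ↔ b ≤ k) :
    ∃ j, 1 ≤ j ∧ j ≤ k ∧ (⟨x, k + 1 - j, false⟩ : GRibbon) ∈ R ∧
      (⟨x, j, true⟩ : GRibbon) ∈ R := by
  obtain ⟨h, t, hr, h0, h1, hhk⟩ :=
    hR.exists_mk_mem_of_leftmost_mem hS ((hcol 0).2 (Nat.zero_le k))
  obtain rfl : t = false := by
    cases t
    · rfl
    · simp [GRibbon.cells] at h0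
      omega
  obtain ⟨j, t', hr', hk', hj1, hjk⟩ := hR.exists_mk_mem_of_leftmost_mem hS ((hcol k).2 le_rfl)
  obtain rfl : t' = true := by
    cases t'
    · simp [GRibbon.cells] at hk'
      omega
    · rfl
  refine ⟨j, hj1, hjk, ?_, hr'⟩
  obtain hlt | rfl | hgt := lt_trichotomy h (k + 1 - j)
  · -- the cell `(x, h)` lies in neither ribbon, and its own ribbon shares an anchor with one
    obtain ⟨h'', t'', hr'', hh'', -⟩ :=
      hR.exists_mk_mem_of_leftmost_mem hS ((hcol h).2 (by omega))
    cases t''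
    · obtain rfl : h = h'' := by
        simpa using hR.eq_of_anchor_eq hr hr'' (by simp [GRibbon.anchor])
      simp [GRibbon.cells] at hh''
    · obtain rfl : j = h'' := by
        simpa using hR.eq_of_anchor_eq hr' hr'' (by simp [GRibbon.anchor])
      simp [GRibbon.cells] at hh''
      omega
  · exact hr
  · have := hR.eq_of_mem_cells hr hr' (p := (x, k + 1 - j))
      (by simp [GRibbon.cells]; omega) (by simp [GRibbon.cells]; omega)
    simp at this

end IsRibbonTiling

def IsColumnTiling (k x : ℕ) : Letter k → Finset GRibbon → Prop
  | .one j, C => C = {⟨x, j, false⟩}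
  | .two, C => ∃ j, 1 ≤ j ∧ j ≤ k ∧ C = {⟨x, k + 1 - j, false⟩, ⟨x, j, true⟩}

namespace IsColumnTiling

variable {k x : ℕ} {l : Letter k} {C : Finset GRibbon}

lemma biUnion_cells (hC : IsColumnTiling k x l C) :
    C.biUnion (GRibbon.cells k) = letterCells k x l := by
  cases l with
  | one j =>
    obtain rfl : C = {⟨x, j, false⟩} := hC
    simp [GRibbon.cells, letterCells_one]
  | two =>
    obtain ⟨j, hj1, hjk, rfl⟩ := hC
    simp [Finset.biUnion_insert, GRibbon.cells, ribbonCellsA_union_ribbonCellsB hj1 hjk]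

lemma card_eq_rank (hC : IsColumnTiling k x l C) : C.card = l.rank := by
  cases l with
  | one j => rw [show C = _ from hC]; rfl
  | two =>
    obtain ⟨j, -, -, rfl⟩ := hC
    simp [Letter.rank]

end IsColumnTiling

namespace IsRibbonTiling

variable {k x : ℕ} {l : Letter k} {w : Word k} {R : Finset GRibbon}

lemma exists_isColumnTiling (hk : 1 ≤ k) (hl : l.Valid k)
    (hR : IsRibbonTiling k R (shapeCellsAux k x (l :: w))) :
    ∃ C ⊆ R, IsColumnTiling k x l C ∧
      IsRibbonTiling k (R \ C) (shapeCellsAux k (x + letterWidth k l) w) := by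
  have hS : ∀ p ∈ shapeCellsAux k x (l :: w), x ≤ p.1 := fun _ => le_fst_of_mem_shapeCellsAux
  have hcol : ∀ b, (x, b) ∈ shapeCellsAux k x (l :: w) ↔ (x, b) ∈ letterCells k x l :=
    fun _ => mk_mem_shapeCellsAux_cons_iff hk
  obtain ⟨C, hCR, hC⟩ : ∃ C ⊆ R, IsColumnTiling k x l C := by
    cases l with
    | one m =>
      have hA := hR.mk_mem_of_leftmost_column_one hS (by simpa [letterCells_one] using hcol)
        hl.1 hl.2
      exact ⟨_, Finset.singleton_subset_iff.2 hA, rfl⟩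
    | two =>
      obtain ⟨j, hj1, hjk, hA, hB⟩ :=
        hR.exists_mk_mem_of_leftmost_column_two hS (by simpa using hcol)
      exact ⟨_, Finset.insert_subset hA (Finset.singleton_subset_iff.2 hB), j, hj1, hjk, rfl⟩
  exact ⟨C, hCR, hC,
    hR.sdiff (disjoint_letterCells_shapeCellsAux hk le_rfl) hCR hC.biUnion_cells⟩

lemma card_eq_rank (hk : 1 ≤ k) (hw : w.Valid k)
    (hR : IsRibbonTiling k R (shapeCellsAux k x w)) : R.card = w.rank := by
  induction w generalizing x R with
  | nil =>
    obtain rfl : R = ∅ := Finset.eq_empty_of_forall_notMem fun r hr => by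
      simpa [shapeCellsAux] using hR.anchor_mem hr
    rfl
  | cons l w ih =>
    obtain ⟨C, hCR, hC, hR'⟩ := hR.exists_isColumnTiling hk hw.head
    rw [← Finset.card_sdiff_add_card_eq_card hCR, ih hw.of_cons hR', hC.card_eq_rank]
    simp [Word.rank, add_comm]

lemma exists_cells_subset_letterCells (hk : 1 ≤ k) (hw : w.Valid k)
    (hR : IsRibbonTiling k R (shapeCellsAux k x w)) :
    ∀ r ∈ R, ∃ i : Fin w.length, r.cells k ⊆ letterCells k (x + colOffset k w i) w[i] := by
  induction w generalizing x R with
  | nil => exact fun r hr => by simpa [shapeCellsAux] using hR.anchor_mem hr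
  | cons l w ih =>
    obtain ⟨C, hCR, hC, hR'⟩ := hR.exists_isColumnTiling hk hw.head
    intro r hr
    by_cases hrC : r ∈ C
    · refine ⟨0, ?_⟩
      simpa [colOffset, ← hC.biUnion_cells] using Finset.subset_biUnion_of_mem _ hrC
    · obtain ⟨i, hi⟩ := ih hw.of_cons hR' r (Finset.mem_sdiff.2 ⟨hr, hrC⟩)
      exact ⟨i.succ, by simpa [colOffset_cons_succ, add_assoc] using hi⟩

lemma isColumnTiling_filter (hk : 1 ≤ k) (hw : w.Valid k)
    (hR : IsRibbonTiling k R (shapeCellsAux k x w)) (i : Fin w.length) :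
    IsColumnTiling k (x + colOffset k w i) w[i]
      (R.filter fun r => r.cells k ⊆ letterCells k (x + colOffset k w i) w[i]) := by
  induction w generalizing x R with
  | nil => exact i.elim0
  | cons l w ih =>
    obtain ⟨C, hCR, hC, hR'⟩ := hR.exists_isColumnTiling hk hw.head
    refine Fin.cases ?_ (fun i => ?_) i
    · have hfilter : R.filter (fun r => r.cells k ⊆ letterCells k x l) = C := by
        ext r
        simp only [Finset.mem_filter]
        refine ⟨fun ⟨hr, hsub⟩ => ?_, fun hrC =>
          ⟨hCR hrC, hC.biUnion_cells ▸ Finset.subset_biUnion_of_mem _ hrC⟩⟩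
        by_contra hrC
        have hrC' : r ∈ R \ C := Finset.mem_sdiff.2 ⟨hr, hrC⟩
        exact hR'.not_cells_subset hrC' (hR'.cells_subset hrC')
          (disjoint_letterCells_shapeCellsAux hk le_rfl).symm hsub
      simpa [colOffset, hfilter] using hC
    · simp only [Fin.val_succ, Fin.getElem_fin, List.getElem_cons_succ, colOffset_cons_succ,
        ← add_assoc]
      have hfilter : R.filter (fun r => r.cells k ⊆
            letterCells k (x + letterWidth k l + colOffset k w i) w[(i : ℕ)]) =
          (R \ C).filter (fun r => r.cells k ⊆
            letterCells k (x + letterWidth k l + colOffset k w i) w[(i : ℕ)]) := by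
        ext r
        simp only [Finset.mem_filter, Finset.mem_sdiff]
        refine ⟨fun ⟨hr, hsub⟩ => ⟨⟨hr, fun hrC => ?_⟩, hsub⟩,
          fun ⟨⟨hr, _⟩, hsub⟩ => ⟨hr, hsub⟩⟩
        exact hR.not_cells_subset hr (hC.biUnion_cells ▸ Finset.subset_biUnion_of_mem _ hrC)
          (disjoint_letterCells_letterCells hk (Nat.le_add_right _ _)) hsub
      rw [hfilter]
      exact ih hw.of_cons hR' i

end IsRibbonTiling

/-- In any `k`-ribbon tiling of a `k`-ribbon Fibonacci shape, every
`k`-ribbon lies entirely within a single column of the shape: each column of height 1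
arising from a letter `1_j` is tiled by exactly one `k`-ribbon, which has height `j`
(and is of the first type), and each column of height 2 (arising from a letter `2`) is
tiled by exactly two `k`-ribbons, one of some height `j` (of the second type) stacked on
top of one of height `k + 1 − j` (of the first type).  Consequently, all `k`-ribbon
tilings of a given `k`-ribbon Fibonacci shape have the same number of `k`-ribbons and
involve the same columns. -/
theorem tiling_ribbons_lie_in_columns (k : ℕ) (hk : 1 ≤ k) (w : Word k)
    (hw : Word.Valid k w) (R : Finset GRibbon) (hR : IsGTiling k w R) :
    (∀ r ∈ R, ∃ i : Fin w.length, GRibbon.cells k r ⊆ colCells k w i) ∧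
    (∀ (i : Fin w.length) (j : ℕ), w[i] = Letter.one j →
      R.filter (fun r => GRibbon.cells k r ⊆ colCells k w i) =
        {⟨colOffset k w (i : ℕ), j, false⟩}) ∧
    (∀ i : Fin w.length, w[i] = Letter.two →
      ∃ j, 1 ≤ j ∧ j ≤ k ∧
        R.filter (fun r => GRibbon.cells k r ⊆ colCells k w i) =
          {⟨colOffset k w (i : ℕ), k + 1 - j, false⟩, ⟨colOffset k w (i : ℕ), j, true⟩}) ∧
    (∀ R' : Finset GRibbon, IsGTiling k w R' → R.card = R'.card) := by
  have hT := hR.isRibbonTiling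
  have hcol (i : Fin w.length) :
      IsColumnTiling k (colOffset k w i) w[i]
        (R.filter fun r => GRibbon.cells k r ⊆ colCells k w i) := by
    have h := hT.isColumnTiling_filter hk hw i
    rw [zero_add] at h
    exact h
  refine ⟨fun r hr => by simpa [colCells] using hT.exists_cells_subset_letterCells hk hw r hr,
    fun i j hi => ?_, fun i hi => ?_, fun R' hR' => ?_⟩
  · simpa [hi, IsColumnTiling] using hcol i
  · simpa [hi, IsColumnTiling] using hcol i
  · rw [hT.card_eq_rank hk hw, hR'.isRibbonTiling.card_eq_rank hk hw]

end KRF
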